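/- Let G be a group whose set S of values of some word w is finite and closed under inversion, and suppose S is invariant under conjugation (which it always is). Then w(G)' is finite. More concretely: if X is a finite conjugation-invariant subset of a group G, then the derived subgroup of ⟨X⟩ is finite. -/

import Mathlib

open Subgroup
open scoped commutatorElement

private lemma commutator_central_aux {G : Type*} [Group G] (a b z w : G)
    (hz : z ∈ Subgroup.center G) (hw : w ∈ Subgroup.center G) :
    ⁅a * z, b * w⁆ = ⁅a, b⁆ := by
  have hz' := Subgroup.mem_center_iff.mp hz
  have hw' := Subgroup.mem_center_iff.mp hw
  have conj_eq : ∀ y : G, (a * z) * y * (a * z)⁻¹ = a * y * a⁻¹ := by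
    intro y
    have hzy : z * y = y * z := (hz' y).symm
    calc (a * z) * y * (a * z)⁻¹ = a * (z * y) * z⁻¹ * a⁻¹ := by group
      _ = a * (y * z) * z⁻¹ * a⁻¹ := by rw [hzy]
      _ = a * y * a⁻¹ := by group
  have hwa : w * a⁻¹ = a⁻¹ * w := (hw' a⁻¹).symm
  calc ⁅a * z, b * w⁆ = (a * z) * (b * w) * (a * z)⁻¹ * (b * w)⁻¹ :=
        commutatorElement_def _ _
    _ = (a * (b * w) * a⁻¹) * (b * w)⁻¹ := by rw [conj_eq]
    _ = a * b * (w * a⁻¹) * (w⁻¹ * b⁻¹) := by group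
    _ = a * b * (a⁻¹ * w) * (w⁻¹ * b⁻¹) := by rw [hwa]
    _ = a * b * a⁻¹ * b⁻¹ := by group
    _ = ⁅a, b⁆ := (commutatorElement_def a b).symm

private lemma finite_commutatorSet_of_finiteIndex_center (G : Type*) [Group G]
    [Subgroup.FiniteIndex (Subgroup.center G)] : Finite (commutatorSet G) := by
  set Z := Subgroup.center G
  haveI : Finite (G ⧸ Z) := inferInstance
  have hsub : commutatorSet G ⊆
      Set.range (fun p : (G ⧸ Z) × (G ⧸ Z) => ⁅p.1.out, p.2.out⁆) := by
    rintro g ⟨a, b, rfl⟩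
    refine ⟨(QuotientGroup.mk a, QuotientGroup.mk b), ?_⟩
    obtain ⟨z, hz⟩ := QuotientGroup.mk_out_eq_mul Z a
    obtain ⟨w, hw⟩ := QuotientGroup.mk_out_eq_mul Z b
    simp only [hz, hw]
    exact commutator_central_aux a b z w z.2 w.2
  exact ((Set.finite_range _).subset hsub).to_subtype

/-- If `X` is a finite conjugation-invariant subset of a group `G`, then the derived
subgroup of `⟨X⟩` is finite. -/
theorem derived_of_finite_normal_subset_finite {G : Type*} [Group G] (X : Set G)
    (hfin : X.Finite) (hconj : ∀ g : G, ∀ x ∈ X, g⁻¹ * x * g ∈ X) :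
    Finite ↥(⁅Subgroup.closure X, Subgroup.closure X⁆ : Subgroup G) := by
  set H := Subgroup.closure X with hH
  haveI : Finite X := hfin.to_subtype
  -- the conjugation representation of `G` on `X`
  let φ : G →* Equiv.Perm X :=
    { toFun := fun g =>
        { toFun := fun x => ⟨g * x * g⁻¹, by simpa using hconj g⁻¹ x x.2⟩
          invFun := fun x => ⟨g⁻¹ * x * g, hconj g x x.2⟩
          left_inv := fun x => by ext; simp [mul_assoc]
          right_inv := fun x => by ext; simp [mul_assoc] }
      map_one' := by ext x; simp
      map_mul' := fun a b => by ext x; simp [mul_assoc] }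
  let ψ : ↥H →* Equiv.Perm X := φ.comp H.subtype
  -- the kernel of `ψ` lies in the center of `H`
  have hker : ψ.ker ≤ Subgroup.center ↥H := by
    intro h hh
    rw [Subgroup.mem_center_iff]
    have hcomm : ∀ x ∈ X, x * (h : G) = (h : G) * x := by
      intro x hx
      have hh1 : ψ h = 1 := hh
      have hfix : (ψ h) ⟨x, hx⟩ = ⟨x, hx⟩ := by rw [hh1]; rfl
      have h2 : (h : G) * x * (h : G)⁻¹ = x := congrArg Subtype.val hfix
      calc x * (h : G) = ((h : G) * x * (h : G)⁻¹) * (h : G) := by rw [h2]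
        _ = (h : G) * x := by group
    intro g
    have : ∀ y ∈ H, y * (h : G) = (h : G) * y := by
      intro y hy
      induction hy using Subgroup.closure_induction with
      | mem x hx => exact hcomm x hx
      | one => simp
      | mul a b _ _ ha hb => rw [mul_assoc, hb, ← mul_assoc, ha, mul_assoc]
      | inv a _ ha =>
          have := ha
          calc a⁻¹ * (h:G) = a⁻¹ * ((h:G) * a) * a⁻¹ := by group
            _ = a⁻¹ * (a * (h:G)) * a⁻¹ := by rw [← this]
            _ = (h:G) * a⁻¹ := by group
    exact Subtype.ext (this g g.2)
  haveI : Finite (Equiv.Perm X) := inferInstance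
  haveI : Finite ψ.range := Set.toFinite _
  haveI : ψ.ker.FiniteIndex := Subgroup.finiteIndex_ker ψ
  haveI : (Subgroup.center ↥H).FiniteIndex := Subgroup.finiteIndex_of_le hker
  haveI : Finite (commutatorSet ↥H) := finite_commutatorSet_of_finiteIndex_center ↥H
  haveI : Finite (_root_.commutator ↥H) := inferInstance
  have hmap : (⁅H, H⁆ : Subgroup G) = Subgroup.map H.subtype (_root_.commutator ↥H) := by
    rw [_root_.commutator, Subgroup.map_commutator, ← MonoidHom.range_eq_map,
      Subgroup.range_subtype]
  rw [hmap]
  have hfin2 : ((_root_.commutator ↥H : Subgroup ↥H) : Set ↥H).Finite := Set.toFinite _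
  have : ((Subgroup.map H.subtype (_root_.commutator ↥H)) : Set G).Finite := by
    rw [Subgroup.coe_map]; exact hfin2.image _
  exact this.to_subtype
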